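/- Let d ≥ 1 and let U = V + g satisfy assumptions (A0) and (A1), and suppose ‖g''‖_{L^q(ℝ)} < ∞ for some q ≥ 1. Then, at inverse temperature β = 1 (i.e. for the single-site measure ν_a with density proportional to exp(−2 Σ_{k=1}^{2d} U(a_k − t))), the variance of the single-site measure is bounded uniformly in the boundary values: there is a finite constant K, depending only on d, C₂, q and ‖g''‖_{L^q(ℝ)}, such that Var_{ν_a}(id) ≤ K for all a ∈ ℝ^{2d}. -/

import Mathlib

/-!
Write `ν_a ∝ exp (-H)` with `H t = ∑ₖ 2 U (a k - t)`. Since `|g''| ≤ C₁/2 + C₀ (2|g''|/C₁)^q`,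
the `L^q` bound on `g''` gives `2 U'' ≥ C₁ - w` with `w ∈ L¹`, hence `H'' ≥ 2d C₁ - W` where
`‖W‖₁ = 2d ‖w‖₁ =: M` does not depend on `a`. Integrating twice from a critical point `t₀` of `H`
(one exists because `H` grows quadratically) gives `H t - H t₀ ≥ d C₁ (t - t₀)² - M |t - t₀|`,
and `H'' ≤ 4d C₂` gives `H t - H t₀ ≤ 2d C₂ (t - t₀)²`. So `exp (-H)` lies between two Gaussians
centred at `t₀` whose ratio is independent of `a`, and `Var ≤ E (t - t₀)²` is bounded uniformly.
-/

open MeasureTheory Real Filter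

noncomputable section

/-- Boltzmann weight of the single odd site given the `2d` neighbouring values `a`. -/
def siteWeight (β : ℝ) (d : ℕ) (U : ℝ → ℝ) (a : Fin (2*d) → ℝ) (t : ℝ) : ℝ :=
  Real.exp (-(2*β) * ∑ k, U (a k - t))

/-- Normalising constant `Z_a`. -/
def Zsite (β : ℝ) (d : ℕ) (U : ℝ → ℝ) (a : Fin (2*d) → ℝ) : ℝ :=
  ∫ t : ℝ, siteWeight β d U a t

/-- Single-site measure `ν_a`. -/
def nuSite (β : ℝ) (d : ℕ) (U : ℝ → ℝ) (a : Fin (2*d) → ℝ) : Measure ℝ :=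
  volume.withDensity fun t => ENNReal.ofReal (siteWeight β d U a t / Zsite β d U a)

/-- Coarse-grained potential `F(a) = -log Z_a`. -/
def Fcg (β : ℝ) (d : ℕ) (U : ℝ → ℝ) (a : Fin (2*d) → ℝ) : ℝ :=
  - Real.log (Zsite β d U a)

/-- Covariance of two functions under a measure on `ℝ`. -/
def covM (ν : Measure ℝ) (f g : ℝ → ℝ) : ℝ :=
  (∫ t, f t * g t ∂ν) - (∫ t, f t ∂ν) * (∫ t, g t ∂ν)

/-- Variance of the identity function under a measure on `ℝ`. -/
def varId (ν : Measure ℝ) : ℝ := covM ν (fun t => t) (fun t => t)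

/-- First partial derivative. -/
def pd {n : ℕ} (Φ : (Fin n → ℝ) → ℝ) (i : Fin n) (a : Fin n → ℝ) : ℝ :=
  fderiv ℝ Φ a (Pi.single i 1)

/-- Second partial derivative. -/
def pd2 {n : ℕ} (Φ : (Fin n → ℝ) → ℝ) (i j : Fin n) (a : Fin n → ℝ) : ℝ :=
  fderiv ℝ (fun x => fderiv ℝ Φ x (Pi.single i 1)) a (Pi.single j 1)

/-- `L^q(ℝ)` norm. -/
def LqNorm (f : ℝ → ℝ) (q : ℝ) : ℝ := (∫ t : ℝ, |f t| ^ q) ^ (1/q)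

theorem quarter_mul_sq_sub_sq_div_le {D : ℝ} (hD : 0 < D) (M τ : ℝ) :
    D / 4 * τ ^ 2 - M ^ 2 / D ≤ D / 2 * τ ^ 2 - M * |τ| := by
  have e : D / 2 * τ ^ 2 - M * |τ| - (D / 4 * τ ^ 2 - M ^ 2 / D) =
      (D * |τ| - 2 * M) ^ 2 / (4 * D) := by
    field_simp
    rw [← sq_abs τ]
    ring
  have : 0 ≤ (D * |τ| - 2 * M) ^ 2 / (4 * D) := by positivity
  linarith

theorem le_add_div_rpow_mul_rpow {y C ε q : ℝ} (hy : 0 ≤ y) (hyC : y ≤ C) (hε : 0 < ε)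
    (hq : 0 ≤ q) : y ≤ ε + C / ε ^ q * y ^ q := by
  rcases le_or_gt y ε with hyε | hεy
  · have : 0 ≤ C / ε ^ q * y ^ q := by have := hy.trans hyC; positivity
    linarith
  · have : 1 ≤ y ^ q / ε ^ q := by
      rw [one_le_div (rpow_pos_of_pos hε q)]
      exact rpow_le_rpow hε.le hεy.le hq
    have : C ≤ C / ε ^ q * y ^ q := by
      rw [div_mul_eq_mul_div, mul_div_assoc]
      exact le_mul_of_one_le_right (hy.trans hyC) this
    linarith [hε]

theorem sub_le_two_mul_add {v y C₀ C₁ q : ℝ} (hv : C₁ ≤ v) (hy : -C₀ ≤ y) (hy0 : y ≤ 0)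
    (hC₁ : 0 < C₁) (hq : 0 ≤ q) : C₁ - 2 * (C₀ / (C₁ / 2) ^ q * |y| ^ q) ≤ 2 * (v + y) := by
  have := le_add_div_rpow_mul_rpow (abs_nonneg y) (abs_le.2 ⟨hy, hy0.trans (by linarith)⟩)
    (half_pos hC₁) hq
  linarith [neg_abs_le y]

theorem ContDiff.hasDerivAt_deriv_two {f : ℝ → ℝ} (hf : ContDiff ℝ 2 f) :
    (∀ x, HasDerivAt f (deriv f x) x) ∧ (∀ x, HasDerivAt (deriv f) (deriv (deriv f) x) x) ∧
      Continuous (deriv (deriv f)) := by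
  rw [show (2 : WithTop ℕ∞) = 1 + 1 from rfl, contDiff_succ_iff_deriv] at hf
  obtain ⟨hf1, -, hf'⟩ := hf
  rw [contDiff_one_iff_deriv] at hf'
  exact ⟨fun x => (hf1 x).hasDerivAt, fun x => (hf'.1 x).hasDerivAt, hf'.2⟩

section SecondDerivativeBounds

variable {f f' f'' w : ℝ → ℝ} {K M : ℝ}

theorem mul_sub_sub_le_sub_of_hasDerivAt (hf' : ∀ x, HasDerivAt f' (f'' x) x)
    (hw : Continuous w) (hw0 : 0 ≤ w) (hwi : Integrable w) (hM : ∫ u, w u ≤ M)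
    (hf'' : ∀ x, K - w x ≤ f'' x) : ∀ x y, x ≤ y → K * (y - x) - M ≤ f' y - f' x := by
  intro x y hxy
  have hmono : Monotone fun t => f' t - K * t + ∫ u in 0..t, w u :=
    monotone_of_hasDerivAt_nonneg
      (fun t => ((hf' t).sub ((hasDerivAt_id t).const_mul K)).add
        (hw.integral_hasStrictDerivAt 0 t).hasDerivAt)
      (fun t => by simp only [Pi.zero_apply, mul_one]; linarith [hf'' t])
  have hW : (∫ u in 0..y, w u) - ∫ u in 0..x, w u ≤ M := by
    rw [intervalIntegral.integral_interval_sub_left (hw.intervalIntegrable _ _)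
      (hw.intervalIntegrable _ _), intervalIntegral.integral_of_le hxy]
    exact (setIntegral_le_integral hwi (Eventually.of_forall hw0)).trans hM
  linarith [hmono hxy]

theorem le_sub_of_forall_mul_sub_sub_le (hf : ∀ x, HasDerivAt f (f' x) x)
    (hf' : ∀ x y, x ≤ y → K * (y - x) - M ≤ f' y - f' x) (t₀ t : ℝ) :
    f' t₀ * (t - t₀) + K / 2 * (t - t₀) ^ 2 - M * |t - t₀| ≤ f t - f t₀ := by
  set φ : ℝ → ℝ → ℝ := fun L s => f s - f' t₀ * s - K / 2 * (s - t₀) ^ 2 + L * s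
  have hφ : ∀ L s, HasDerivAt (φ L) (f' s - f' t₀ - K * (s - t₀) + L) s := fun L s => by
    have := ((((hf s).sub ((hasDerivAt_id s).const_mul (f' t₀))).sub
      ((((hasDerivAt_id s).sub_const t₀).pow 2).const_mul (K / 2))).add
      ((hasDerivAt_id s).const_mul L))
    exact this.congr_deriv (by
      simp only [mul_one, id_eq, Nat.cast_ofNat, Nat.add_one_sub_one, pow_one]
      ring)
  have hφc : ∀ L, Continuous (φ L) := fun L =>
    continuous_iff_continuousAt.2 fun s => (hφ L s).continuousAt
  rcases le_total t₀ t with ht | ht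
  · have hmono : MonotoneOn (φ M) (Set.Ici t₀) :=
      monotoneOn_of_hasDerivWithinAt_nonneg (convex_Ici t₀) (hφc M).continuousOn
        (fun s _ => (hφ M s).hasDerivWithinAt)
        (fun s hs => by rw [interior_Ici] at hs; linarith [hf' t₀ s (le_of_lt hs)])
    have := hmono Set.self_mem_Ici ht ht
    rw [abs_of_nonneg (sub_nonneg.2 ht)]
    simp only [φ] at this
    linarith
  · have hanti : AntitoneOn (φ (-M)) (Set.Iic t₀) :=
      antitoneOn_of_hasDerivWithinAt_nonpos (convex_Iic t₀) (hφc (-M)).continuousOn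
        (fun s _ => (hφ (-M) s).hasDerivWithinAt)
        (fun s hs => by rw [interior_Iic] at hs; linarith [hf' s t₀ (le_of_lt hs)])
    have := hanti ht Set.self_mem_Iic ht
    rw [abs_of_nonpos (sub_nonpos.2 ht)]
    simp only [φ] at this
    linarith

theorem exists_eq_zero_of_forall_mul_sub_sub_le (hf : ∀ x, HasDerivAt f (f' x) x)
    (hf' : ∀ x y, x ≤ y → K * (y - x) - M ≤ f' y - f' x) (hK : 0 < K) : ∃ t₀, f' t₀ = 0 := by
  set L := |f' 0| + M
  have hcoercive : ∀ t, K / 4 * t ^ 2 + (f 0 - L ^ 2 / K) ≤ f t := fun t => by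
    have h := le_sub_of_forall_mul_sub_sub_le hf hf' 0 t
    simp only [sub_zero] at h
    have hL : f' 0 * t - M * |t| ≥ -L * |t| := by
      nlinarith [neg_abs_le (f' 0 * t), abs_mul (f' 0) t, abs_nonneg t, abs_nonneg (f' 0)]
    have hAMGM := quarter_mul_sq_sub_sq_div_le hK L t
    linarith
  have hsq : Tendsto (fun t : ℝ => t ^ 2) (cocompact ℝ) atTop :=
    ((tendsto_pow_atTop two_ne_zero).comp tendsto_norm_cocompact_atTop).congr
      fun t => by simp [Real.norm_eq_abs, sq_abs]
  obtain ⟨t₀, ht₀⟩ := (continuous_iff_continuousAt.2 fun x => (hf x).continuousAt).exists_forall_le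
    (tendsto_atTop_mono hcoercive
      (tendsto_atTop_add_const_right _ _ (hsq.const_mul_atTop (by positivity))))
  exact ⟨t₀, IsLocalMin.hasDerivAt_eq_zero (Eventually.of_forall ht₀) (hf t₀)⟩

end SecondDerivativeBounds

section TranslateSum

variable {ι : Type*} [Fintype ι]

theorem hasDerivAt_sum_comp_sub {f f' : ℝ → ℝ} (hf : ∀ x, HasDerivAt f (f' x) x) (a : ι → ℝ)
    (t : ℝ) : HasDerivAt (fun t => ∑ k, f (a k - t)) (-∑ k, f' (a k - t)) t := by
  have h := HasDerivAt.fun_sum fun k (_ : k ∈ Finset.univ) =>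
    (hf (a k - t)).comp t ((hasDerivAt_id t).const_sub (a k))
  simpa using h

theorem integral_sum_comp_sub {w : ℝ → ℝ} (hw : Integrable w) (a : ι → ℝ) :
    ∫ u, ∑ k, w (a k - u) = Fintype.card ι * ∫ u, w u := by
  rw [integral_finsetSum _ fun k _ => hw.comp_sub_left (a k)]
  simp [integral_sub_left_eq_self]

theorem exists_quadratic_sandwich_sum_comp_sub [Nonempty ι] {U U' U'' w : ℝ → ℝ} {κ κ₂ : ℝ}
    (hU : ∀ x, HasDerivAt U (U' x) x) (hU' : ∀ x, HasDerivAt U' (U'' x) x)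
    (hw : Continuous w) (hw0 : 0 ≤ w) (hwi : Integrable w) (hκ : 0 < κ)
    (hlow : ∀ s, κ - w s ≤ U'' s) (hup : ∀ s, U'' s ≤ κ₂) (a : ι → ℝ) :
    ∃ t₀, ∀ t,
      Fintype.card ι * κ / 4 * (t - t₀) ^ 2 - (Fintype.card ι * ∫ u, w u) ^ 2 /
          (Fintype.card ι * κ) ≤ ∑ k, U (a k - t) - ∑ k, U (a k - t₀) ∧
        ∑ k, U (a k - t) - ∑ k, U (a k - t₀) ≤ Fintype.card ι * κ₂ / 2 * (t - t₀) ^ 2 := by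
  have hnκ : 0 < Fintype.card ι * κ := mul_pos (by simp [Fintype.card_pos]) hκ
  have hΦ := hasDerivAt_sum_comp_sub hU a
  have hΦ' : ∀ t, HasDerivAt (fun t => -∑ k, U' (a k - t)) (∑ k, U'' (a k - t)) t := fun t =>
    (hasDerivAt_sum_comp_sub hU' a t).neg.congr_deriv (neg_neg _)
  have hconvex := mul_sub_sub_le_sub_of_hasDerivAt (w := fun u => ∑ k, w (a k - u))
    (K := Fintype.card ι * κ) hΦ'
    (continuous_finsetSum _ fun k _ => hw.comp (continuous_const.sub continuous_id))
    (fun _ => Finset.sum_nonneg fun k _ => hw0 _)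
    (integrable_finsetSum _ fun k _ => hwi.comp_sub_left (a k))
    (integral_sum_comp_sub hwi a).le fun u => by
      have := Finset.sum_le_sum fun k (_ : k ∈ Finset.univ) => hlow (a k - u)
      simp only [Finset.sum_sub_distrib, Finset.sum_const, Finset.card_univ, nsmul_eq_mul] at this
      linarith
  have hconcave := mul_sub_sub_le_sub_of_hasDerivAt (w := fun _ => 0) (M := 0)
    (K := -(Fintype.card ι * κ₂)) (fun t => (hΦ' t).neg) continuous_const le_rfl
    (integrable_zero _ _ _) (by simp) fun u => by
      have := Finset.sum_le_sum fun k (_ : k ∈ Finset.univ) => hup (a k - u)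
      simp only [Finset.sum_const, Finset.card_univ, nsmul_eq_mul] at this
      linarith
  obtain ⟨t₀, ht₀⟩ := exists_eq_zero_of_forall_mul_sub_sub_le hΦ hconvex hnκ
  refine ⟨t₀, fun t => ⟨?_, ?_⟩⟩
  · have := le_sub_of_forall_mul_sub_sub_le hΦ hconvex t₀ t
    rw [ht₀] at this
    linarith [quarter_mul_sq_sub_sq_div_le hnκ (Fintype.card ι * ∫ u, w u) (t - t₀)]
  · have := le_sub_of_forall_mul_sub_sub_le (fun t => (hΦ t).neg) hconcave t₀ t
    simp only [ht₀, Pi.neg_apply, neg_zero] at this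
    linarith

end TranslateSum

section GaussianSandwich

theorem integrable_sq_mul_exp_neg_mul_sq {c : ℝ} (hc : 0 < c) :
    Integrable fun s : ℝ => s ^ 2 * exp (-c * s ^ 2) := by
  simpa [Real.rpow_natCast] using integrable_rpow_mul_exp_neg_mul_sq hc (s := 2) (by norm_num)

theorem integral_withDensity_ofReal_div {ρ : ℝ → ℝ} (hρ : Measurable ρ) (hρ0 : 0 ≤ ρ) {Z : ℝ}
    (hZ : 0 ≤ Z) (f : ℝ → ℝ) :
    ∫ t, f t ∂(volume.withDensity fun t => ENNReal.ofReal (ρ t / Z)) =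
      Z⁻¹ * ∫ t, f t * ρ t := by
  rw [integral_withDensity_eq_integral_toReal_smul (hρ.div_const Z).ennreal_ofReal
    (ae_of_all _ fun _ => ENNReal.ofReal_lt_top), ← integral_const_mul]
  congr 1 with t
  rw [ENNReal.toReal_ofReal (div_nonneg (hρ0 t) hZ), smul_eq_mul]
  ring

theorem varId_withDensity_le {ρ : ℝ → ℝ} (hρ : Measurable ρ) (hρ0 : 0 ≤ ρ)
    (hi0 : Integrable ρ) (hi1 : Integrable fun t => t * ρ t)
    (hi2 : Integrable fun t => t * t * ρ t) (hZ : 0 < ∫ t, ρ t) (t₀ : ℝ) :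
    varId (volume.withDensity fun t => ENNReal.ofReal (ρ t / ∫ s, ρ s)) ≤
      (∫ t, (t - t₀) ^ 2 * ρ t) / ∫ t, ρ t := by
  have hsplit : ∫ t, (t - t₀) ^ 2 * ρ t =
      (∫ t, t * t * ρ t) - 2 * t₀ * (∫ t, t * ρ t) + t₀ ^ 2 * ∫ t, ρ t := by
    have h := integral_add (hi2.sub (hi1.const_mul (2 * t₀))) (hi0.const_mul (t₀ ^ 2))
    simp only [Pi.sub_apply] at h
    rw [integral_sub hi2 (hi1.const_mul _), integral_const_mul, integral_const_mul] at h
    rw [← h]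
    congr 1 with t
    ring
  simp only [varId, covM, integral_withDensity_ofReal_div hρ hρ0 hZ.le]
  rw [hsplit]
  set Z := ∫ t, ρ t
  set I1 := ∫ t, t * ρ t
  set I2 := ∫ t, t * t * ρ t
  have key : (Z⁻¹ * I1 - t₀) ^ 2 =
      Z⁻¹ * (I2 - 2 * t₀ * I1 + t₀ ^ 2 * Z) - (Z⁻¹ * I2 - Z⁻¹ * I1 * (Z⁻¹ * I1)) := by
    field_simp
    ring
  rw [div_eq_inv_mul]
  nlinarith [sq_nonneg (Z⁻¹ * I1 - t₀)]

theorem integrable_mul_of_le_gaussian {ρ P : ℝ → ℝ} {t₀ c C α β : ℝ} (hc : 0 < c)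
    (hρ : Continuous ρ) (hP : Continuous P) (hρ0 : 0 ≤ ρ)
    (hρle : ∀ t, ρ t ≤ C * exp (-c * (t - t₀) ^ 2)) (hPle : ∀ t, |P t| ≤ α + β * (t - t₀) ^ 2) :
    Integrable fun t => P t * ρ t := by
  have hdom : Integrable fun t => C * ((α + β * (t - t₀) ^ 2) * exp (-c * (t - t₀) ^ 2)) := by
    have h := ((integrable_exp_neg_mul_sq hc).const_mul α).add
      ((integrable_sq_mul_exp_neg_mul_sq hc).const_mul β)
    refine ((h.comp_sub_right t₀).const_mul C).congr (ae_of_all _ fun t => ?_)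
    simp only [Pi.add_apply]
    ring
  refine hdom.mono' (hP.mul hρ).aestronglyMeasurable (ae_of_all _ fun t => ?_)
  rw [norm_mul, Real.norm_eq_abs, Real.norm_eq_abs, abs_of_nonneg (hρ0 t)]
  calc |P t| * ρ t ≤ (α + β * (t - t₀) ^ 2) * (C * exp (-c * (t - t₀) ^ 2)) :=
        mul_le_mul (hPle t) (hρle t) (hρ0 t) ((abs_nonneg _).trans (hPle t))
    _ = C * ((α + β * (t - t₀) ^ 2) * exp (-c * (t - t₀) ^ 2)) := by ring

theorem varId_withDensity_exp_neg_le {H : ℝ → ℝ} {t₀ c c₂ K : ℝ} (hH : Continuous H)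
    (hc : 0 < c) (hc₂ : 0 < c₂) (hlow : ∀ t, c * (t - t₀) ^ 2 - K ≤ H t - H t₀)
    (hup : ∀ t, H t - H t₀ ≤ c₂ * (t - t₀) ^ 2) :
    varId (volume.withDensity fun t => ENNReal.ofReal (exp (-H t) / ∫ s, exp (-H s))) ≤
      exp K * (∫ s, s ^ 2 * exp (-c * s ^ 2)) / √(π / c₂) := by
  set m := exp (-H t₀)
  set ρ : ℝ → ℝ := fun t => exp (-H t)
  have hρc : Continuous ρ := continuous_exp.comp hH.neg
  have hρ0 : 0 ≤ ρ := fun t => (exp_pos _).le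
  have hρle : ∀ t, ρ t ≤ m * exp K * exp (-c * (t - t₀) ^ 2) := fun t => by
    simp only [ρ, m, ← exp_add]
    exact exp_le_exp.2 (by linarith [hlow t])
  have hρge : ∀ t, m * exp (-c₂ * (t - t₀) ^ 2) ≤ ρ t := fun t => by
    simp only [ρ, m, ← exp_add]
    exact exp_le_exp.2 (by linarith [hup t])
  have hint : ∀ {P : ℝ → ℝ} (α β : ℝ), Continuous P → (∀ t, |P t| ≤ α + β * (t - t₀) ^ 2) →
      Integrable fun t => P t * ρ t := fun α β hP hPle =>
    integrable_mul_of_le_gaussian hc hρc hP hρ0 hρle hPle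
  have hi0 : Integrable ρ := by
    simpa using hint (P := fun _ => 1) 1 0 continuous_const (fun t => by simp)
  have hi1 : Integrable fun t => t * ρ t := hint (1 + |t₀|) 1 continuous_id fun t => by
    nlinarith [abs_sub_abs_le_abs_sub t t₀, sq_abs (t - t₀), sq_nonneg (|t - t₀| - 1)]
  have hi2 : Integrable fun t => t * t * ρ t :=
    hint (2 * t₀ ^ 2) 2 (continuous_id.mul continuous_id) fun t => by
      rw [abs_mul_self]
      nlinarith [sq_nonneg (t - 2 * t₀)]
  have hisq : Integrable fun t => (t - t₀) ^ 2 * ρ t :=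
    hint 0 1 ((continuous_id.sub continuous_const).pow 2) fun t => by
      rw [abs_of_nonneg (sq_nonneg _)]
      linarith
  have hZ : m * √(π / c₂) ≤ ∫ t, ρ t := by
    have hg := ((integrable_exp_neg_mul_sq hc₂).comp_sub_right t₀).const_mul m
    refine le_of_eq_of_le ?_ (integral_mono hg hi0 hρge)
    rw [integral_const_mul, integral_sub_right_eq_self (fun s => exp (-c₂ * s ^ 2)),
      integral_gaussian]
  have hmoment : ∫ t, (t - t₀) ^ 2 * ρ t ≤ m * exp K * ∫ s, s ^ 2 * exp (-c * s ^ 2) := by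
    have hg : Integrable fun t => m * exp K * ((t - t₀) ^ 2 * exp (-c * (t - t₀) ^ 2)) :=
      ((integrable_sq_mul_exp_neg_mul_sq hc).comp_sub_right t₀).const_mul _
    refine (integral_mono hisq hg fun t => ?_).trans_eq ?_
    · calc (t - t₀) ^ 2 * ρ t ≤ (t - t₀) ^ 2 * (m * exp K * exp (-c * (t - t₀) ^ 2)) :=
            mul_le_mul_of_nonneg_left (hρle t) (sq_nonneg _)
        _ = m * exp K * ((t - t₀) ^ 2 * exp (-c * (t - t₀) ^ 2)) := by ring
    · rw [integral_const_mul, integral_sub_right_eq_self (fun s => s ^ 2 * exp (-c * s ^ 2))]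
  have hm : 0 < m * √(π / c₂) := mul_pos (exp_pos _) (sqrt_pos.2 (by positivity))
  calc _ ≤ (∫ t, (t - t₀) ^ 2 * ρ t) / ∫ t, ρ t :=
        varId_withDensity_le hρc.measurable hρ0 hi0 hi1 hi2 (hm.trans_le hZ) t₀
    _ ≤ m * exp K * (∫ s, s ^ 2 * exp (-c * s ^ 2)) / (m * √(π / c₂)) :=
        div_le_div₀ (by positivity) hmoment hm hZ
    _ = exp K * (∫ s, s ^ 2 * exp (-c * s ^ 2)) / √(π / c₂) := by
        rw [mul_assoc, mul_div_mul_left _ _ (exp_pos _).ne']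

end GaussianSandwich

theorem nuSite_one_eq (d : ℕ) (U : ℝ → ℝ) (a : Fin (2 * d) → ℝ) :
    nuSite 1 d U a = volume.withDensity fun t =>
      ENNReal.ofReal (exp (-∑ k, 2 * U (a k - t)) / ∫ s, exp (-∑ k, 2 * U (a k - s))) := by
  simp only [nuSite, Zsite, siteWeight, mul_one, neg_mul, Finset.mul_sum, Finset.sum_neg_distrib]

theorem statement16_general
    {d : ℕ} {C₀ C₁ C₂ q : ℝ} {U V g : ℝ → ℝ}
    (hd : 1 ≤ d)
    -- (A1)
    (hsum : ∀ s, U s = V s + g s)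
    (hV : ContDiff ℝ 2 V) (hg : ContDiff ℝ 2 g)
    (hC₁ : 0 < C₁)
    (hV'' : ∀ s, C₁ ≤ deriv (deriv V) s ∧ deriv (deriv V) s ≤ C₂)
    (hg'' : ∀ s, -C₀ ≤ deriv (deriv g) s ∧ deriv (deriv g) s ≤ 0)
    -- finiteness of the `L^q` norm of `g''`
    (hq : 1 ≤ q)
    (hgq : Integrable (fun t : ℝ => |deriv (deriv g) t| ^ q)) :
    ∃ K : ℝ, ∀ a : Fin (2*d) → ℝ, varId (nuSite 1 d U a) ≤ K := by
  obtain ⟨hV₁, hV₂, -⟩ := hV.hasDerivAt_deriv_two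
  obtain ⟨hg₁, hg₂, hg₂c⟩ := hg.hasDerivAt_deriv_two
  have hU₁ : ∀ x, HasDerivAt (fun s => 2 * U s) (2 * (deriv V x + deriv g x)) x := fun x => by
    simpa only [hsum, Pi.add_apply] using ((hV₁ x).add (hg₁ x)).const_mul 2
  have hq₀ : 0 ≤ q := by linarith
  set w : ℝ → ℝ := fun s => 2 * (C₀ / (C₁ / 2) ^ q * |deriv (deriv g) s| ^ q)
  have hw0 : 0 ≤ w := fun s => by
    have : 0 ≤ C₀ := by linarith [hg'' 0]
    positivity
  set n : ℝ := ((2 * d : ℕ) : ℝ)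
  have hn : 0 < n := by positivity
  have hC₂ : 0 < n * (2 * C₂) / 2 := by nlinarith [hV'' 0]
  have : Nonempty (Fin (2 * d)) := ⟨⟨0, by omega⟩⟩
  refine ⟨exp ((n * ∫ u, w u) ^ 2 / (n * C₁)) * (∫ s, s ^ 2 * exp (-(n * C₁ / 4) * s ^ 2)) /
    √(π / (n * (2 * C₂) / 2)), fun a => ?_⟩
  obtain ⟨t₀, ht₀⟩ := exists_quadratic_sandwich_sum_comp_sub (κ₂ := 2 * C₂) hU₁
    (fun x => ((hV₂ x).add (hg₂ x)).const_mul 2)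
    (continuous_const.mul (continuous_const.mul (hg₂c.abs.rpow_const fun _ => Or.inr hq₀))) hw0
    ((hgq.const_mul _).const_mul 2) hC₁
    (fun s => sub_le_two_mul_add (hV'' s).1 (hg'' s).1 (hg'' s).2 hC₁ hq₀)
    (fun s => by linarith [(hV'' s).2, (hg'' s).2]) a
  simp only [Fintype.card_fin] at ht₀
  rw [nuSite_one_eq]
  exact varId_withDensity_exp_neg_le
    (continuous_finsetSum _ fun k _ => (continuous_iff_continuousAt.2 fun x =>
      (hU₁ x).continuousAt).comp (continuous_const.sub continuous_id))
    (by positivity) hC₂ (fun t => (ht₀ t).1) (fun t => (ht₀ t).2)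

/-- **Statement 16** (uniform bound (4.15) on the single-site variance at `β = 1`). -/
theorem statement16
    {d : ℕ} {A B C₀ C₁ C₂ q : ℝ} {U V g : ℝ → ℝ}
    (hd : 1 ≤ d)
    -- (A0)
    (hUcont : Continuous U) (hA : 0 < A) (hA0 : ∀ η : ℝ, A * η ^ 2 - B ≤ U η)
    -- (A1)
    (hsum : ∀ s, U s = V s + g s)
    (hV : ContDiff ℝ 2 V) (hg : ContDiff ℝ 2 g)
    (hC₁ : 0 < C₁) (hC₁₂ : C₁ < C₂) (hC₂₀ : C₂ < C₀)
    (hV'' : ∀ s, C₁ ≤ deriv (deriv V) s ∧ deriv (deriv V) s ≤ C₂)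
    (hg'' : ∀ s, -C₀ ≤ deriv (deriv g) s ∧ deriv (deriv g) s ≤ 0)
    -- finiteness of the `L^q` norm of `g''`
    (hq : 1 ≤ q)
    (hgq : Integrable (fun t : ℝ => |deriv (deriv g) t| ^ q)) :
    ∃ K : ℝ, ∀ a : Fin (2*d) → ℝ, varId (nuSite 1 d U a) ≤ K :=
  statement16_general hd hsum hV hg hC₁ hV'' hg'' hq hgq

end
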